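/- arXiv:math/0309177 — 2 statements merged into one kernel-verified Lean document; each statement's English description precedes it below -/
import Mathlib

section
/- Let (T, h) be a flat torus of dimension n with diameter bounded by D and let h_τ = τ^{−2} h for τ ≥ 1. Suppose f : T → ℝ is smooth, satisfies ∫_T f dV_h = 0, and for each k there is a constant A_k with |∇^k f|_{h_τ} ≤ A_k (i.e., f is C^∞-bounded with respect to h_τ). Then for every positive integer n there is a constant C(n), depending only on the bounds A_k and D but not on τ, such that |f| ≤ C(n) τ^{−n} on T. -/
open MeasureTheory

section FlatTorusAux

variable {d : ℕ}

lemma sum_single_eq (v : Fin d → ℝ) :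
    ∑ i, v i • (Pi.single i 1 : Fin d → ℝ) = v := by
  funext j
  simp [Finset.sum_apply, Pi.single_apply, mul_ite]

lemma opnorm_le_sum (L : (Fin d → ℝ) →L[ℝ] ℝ) :
    ‖L‖ ≤ ∑ i, ‖L (Pi.single i (1:ℝ))‖ := by
  refine L.opNorm_le_bound (by positivity) fun v => ?_
  conv_lhs => rw [← sum_single_eq v]
  rw [map_sum]
  calc ‖∑ i, L (v i • (Pi.single i 1 : Fin d → ℝ))‖
      ≤ ∑ i, ‖L (v i • (Pi.single i 1 : Fin d → ℝ))‖ := norm_sum_le _ _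
    _ ≤ ∑ i, ‖L (Pi.single i (1:ℝ))‖ * ‖v‖ := by
        refine Finset.sum_le_sum fun i _ => ?_
        rw [_root_.map_smul]
        simp only [norm_smul, Real.norm_eq_abs]
        rw [mul_comm]
        gcongr
        exact (Real.norm_eq_abs (v i)) ▸ norm_le_pi_norm v i
    _ = (∑ i, ‖L (Pi.single i (1:ℝ))‖) * ‖v‖ := by rw [Finset.sum_mul]

lemma per_int {g : (Fin d → ℝ) → ℝ} {P : Fin d → ℝ}
    (hper : ∀ (i : Fin d) (x : Fin d → ℝ), g (x + Pi.single i (P i)) = g x)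
    (i : Fin d) (k : ℤ) (x : Fin d → ℝ) :
    g (x + k • Pi.single i (P i)) = g x := by
  induction k using Int.induction_on with
  | zero => simp
  | succ k ih =>
      have e : x + ((k:ℤ)+1) • Pi.single i (P i)
          = (x + (k:ℤ) • Pi.single i (P i)) + Pi.single i (P i) := by
        rw [add_smul, one_smul, add_assoc]
      rw [e, hper, ih]
  | pred k ih =>
      have e : (x + (-(k:ℤ)-1) • Pi.single i (P i)) + Pi.single i (P i)
          = x + (-(k:ℤ)) • Pi.single i (P i) := by
        rw [sub_smul, one_smul, add_assoc]
        congr 1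
        abel
      have h2 := hper i (x + (-(k:ℤ)-1) • Pi.single i (P i))
      rw [e] at h2
      rw [← h2, ih]

lemma per_lattice {g : (Fin d → ℝ) → ℝ} {P : Fin d → ℝ}
    (hper : ∀ (i : Fin d) (x : Fin d → ℝ), g (x + Pi.single i (P i)) = g x)
    (m : Fin d → ℤ) (x : Fin d → ℝ) :
    g (x + ∑ i, m i • Pi.single i (P i)) = g x := by
  classical
  have H : ∀ s : Finset (Fin d), g (x + ∑ i ∈ s, m i • Pi.single i (P i)) = g x := by
    intro s
    induction s using Finset.induction_on with
    | empty => simp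
    | @insert j s' hj ih =>
        rw [Finset.sum_insert hj]
        have e : x + (m j • Pi.single j (P j) + ∑ i ∈ s', m i • Pi.single i (P i))
            = (x + ∑ i ∈ s', m i • Pi.single i (P i)) + m j • Pi.single j (P j) := by
          abel
        rw [e, per_int hper, ih]
  exact H Finset.univ


noncomputable def red (P x : Fin d → ℝ) : Fin d → ℝ := fun i => P i * Int.fract (x i / P i)

lemma red_mem {P : Fin d → ℝ} (hP : ∀ i, 0 < P i) (x : Fin d → ℝ) (i : Fin d) :
    red P x i ∈ Set.Icc (0:ℝ) (P i) := by
  simp only [red]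
  constructor
  · exact mul_nonneg (hP i).le (Int.fract_nonneg _)
  · nlinarith [Int.fract_lt_one (x i / P i), Int.fract_nonneg (x i / P i), hP i]

lemma red_decomp {P : Fin d → ℝ} (hP : ∀ i, 0 < P i) (x : Fin d → ℝ) :
    red P x + ∑ i, (⌊x i / P i⌋ : ℤ) • Pi.single i (P i) = x := by
  funext j
  have hsum : (∑ i, (⌊x i / P i⌋ : ℤ) • (Pi.single i (P i) : Fin d → ℝ)) j
      = (⌊x j / P j⌋ : ℝ) * P j := by
    rw [Finset.sum_apply]
    rw [Finset.sum_eq_single j]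
    · simp [Pi.single_apply]
    · intro i _ hi
      simp [Pi.single_apply, Ne.symm hi]
    · simp
  show red P x j + _ = x j
  rw [hsum]
  unfold red
  rw [Int.fract]
  have : P j ≠ 0 := (hP j).ne'
  field_simp
  ring

lemma pos_integral {P : Fin d → ℝ} (hP : ∀ i, 0 < P i) {f : (Fin d → ℝ) → ℝ}
    (hc : Continuous f)
    (hpos : ∀ y ∈ Set.univ.pi fun i => Set.Icc (0:ℝ) (P i), 0 < f y) :
    0 < ∫ x in Set.univ.pi fun i => Set.Ico (0 : ℝ) (P i), f x := by
  set K : Set (Fin d → ℝ) := Set.univ.pi fun i => Set.Icc (0:ℝ) (P i) with hK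
  set box : Set (Fin d → ℝ) := Set.univ.pi fun i => Set.Ico (0:ℝ) (P i) with hbox
  have hKc : IsCompact K := isCompact_univ_pi fun i => isCompact_Icc
  have hKne : K.Nonempty := ⟨0, fun i _ => ⟨le_refl 0, (hP i).le⟩⟩
  have hsub : box ⊆ K := Set.pi_mono fun i _ => Set.Ico_subset_Icc_self
  obtain ⟨ymin, hymin, hmin⟩ := hKc.exists_isMinOn hKne hc.continuousOn
  have hε : 0 < f ymin := hpos ymin hymin
  have hvol : volume box = ∏ i, ENNReal.ofReal (P i) := by
    rw [hbox, volume_pi_pi]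
    simp [Real.volume_Ico]
  have hfin : volume box ≠ ⊤ := by
    rw [hvol]
    exact (ENNReal.prod_lt_top fun i _ => ENNReal.ofReal_lt_top).ne
  have hpos' : 0 < (volume box).toReal := by
    apply ENNReal.toReal_pos _ hfin
    rw [hvol]
    rw [Finset.prod_ne_zero_iff]
    intro i _
    exact (ENNReal.ofReal_pos.mpr (hP i)).ne'
  have hmeas : MeasurableSet box := MeasurableSet.univ_pi fun i => measurableSet_Ico
  have hint : IntegrableOn f box := by
    exact (hc.continuousOn.integrableOn_compact hKc).mono_set hsub
  calc (0:ℝ) < f ymin * (volume box).toReal := by positivity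
    _ ≤ ∫ x in box, f x := by
        apply setIntegral_ge_of_const_le_real hmeas hfin _ hint
        intro x hx
        exact hmin (hsub hx)

lemma exists_zero {P : Fin d → ℝ} (hP : ∀ i, 0 < P i) {f : (Fin d → ℝ) → ℝ}
    (hc : Continuous f)
    (hint : ∫ x in Set.univ.pi fun i => Set.Ico (0 : ℝ) (P i), f x = 0) :
    ∃ y ∈ Set.univ.pi fun i => Set.Icc (0:ℝ) (P i), f y = 0 := by
  set K : Set (Fin d → ℝ) := Set.univ.pi fun i => Set.Icc (0:ℝ) (P i) with hK
  by_contra h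
  push_neg at h
  have hKconv : Convex ℝ K := convex_pi fun i _ => convex_Icc _ _
  -- no sign change possible
  have hnosign : ¬ ((∃ a ∈ K, f a < 0) ∧ (∃ b ∈ K, 0 < f b)) := by
    rintro ⟨⟨a, ha, hfa⟩, ⟨b, hb, hfb⟩⟩
    have hγ : Continuous fun t : ℝ => f ((1 - t) • a + t • b) := by fun_prop
    have h01 : (0:ℝ) ≤ 1 := zero_le_one
    have := intermediate_value_Icc h01 hγ.continuousOn
    have h0mem : (0:ℝ) ∈ Set.Icc (f ((1-(0:ℝ)) • a + (0:ℝ) • b)) (f ((1-(1:ℝ)) • a + (1:ℝ) • b)) := by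
      simp only [sub_zero, one_smul, zero_smul, add_zero, sub_self, zero_add]
      exact ⟨hfa.le, hfb.le⟩
    obtain ⟨t, ht, hft⟩ := this h0mem
    have hmem : (1 - t) • a + t • b ∈ K :=
      hKconv ha hb (by linarith [ht.2]) ht.1 (by ring)
    exact h _ hmem hft
  rcases lt_trichotomy (f 0) 0 with h0 | h0 | h0
  · -- all negative
    have hneg : ∀ y ∈ K, f y < 0 := by
      intro y hy
      rcases lt_trichotomy (f y) 0 with h' | h' | h'
      · exact h'
      · exact absurd h' (h y hy)
      · exact absurd ⟨⟨0, ⟨fun i _ => ⟨le_refl 0, (hP i).le⟩, h0⟩⟩, ⟨y, hy, h'⟩⟩ hnosign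
    have := pos_integral hP (f := fun x => -f x) (by fun_prop)
      (fun y hy => by simpa using hneg y hy)
    rw [integral_neg] at this
    rw [hint] at this
    norm_num at this
  · exact h 0 (fun i _ => ⟨le_refl 0, (hP i).le⟩) h0
  · -- all positive
    have hpos : ∀ y ∈ K, 0 < f y := by
      intro y hy
      rcases lt_trichotomy (f y) 0 with h' | h' | h'
      · exact absurd ⟨⟨y, hy, h'⟩, ⟨0, ⟨fun i _ => ⟨le_refl 0, (hP i).le⟩, h0⟩⟩⟩ hnosign
      · exact absurd h' (h y hy)
      · exact h'
    have := pos_integral hP hc hpos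
    rw [hint] at this
    norm_num at this

lemma fderiv_shift {g : (Fin d → ℝ) → ℝ} (hg : Differentiable ℝ g)
    (v : Fin d → ℝ) (h : ∀ x, g (x + v) = g x) (x : Fin d → ℝ) :
    fderiv ℝ g (x + v) = fderiv ℝ g x := by
  have h1 : HasFDerivAt (fun y => g (y + v)) (fderiv ℝ g (x + v)) x := by
    have := (hg (x + v)).hasFDerivAt.comp x ((hasFDerivAt_id x).add_const v)
    simpa [Function.comp_def] using this
  have e : (fun y => g (y + v)) = g := funext h
  rw [e] at h1
  exact h1.fderiv.symm

lemma pd_bound (g : (Fin d → ℝ) → ℝ) (hg : ContDiff ℝ (⊤ : ℕ∞) g) (i : Fin d) (k : ℕ) (z : Fin d → ℝ) :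
    ‖iteratedFDeriv ℝ k (fun z => fderiv ℝ g z (Pi.single i 1)) z‖
      ≤ ‖iteratedFDeriv ℝ (k+1) g z‖ := by
  classical
  set L : ((Fin d → ℝ) →L[ℝ] ℝ) →L[ℝ] ℝ := ContinuousLinearMap.apply ℝ ℝ (Pi.single i 1)
  have hL : ‖L‖ ≤ 1 := by
    apply ContinuousLinearMap.opNorm_le_bound _ zero_le_one
    intro M
    have : ‖M (Pi.single i 1)‖ ≤ ‖M‖ * ‖(Pi.single i 1 : Fin d → ℝ)‖ := M.le_opNorm _
    have h1 : ‖(Pi.single i 1 : Fin d → ℝ)‖ ≤ 1 := by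
      apply pi_norm_le_iff_of_nonneg zero_le_one |>.mpr
      intro j
      rw [Pi.single_apply]
      split <;> simp
    calc ‖L M‖ = ‖M (Pi.single i 1)‖ := rfl
      _ ≤ ‖M‖ * ‖(Pi.single i 1 : Fin d → ℝ)‖ := M.le_opNorm _
      _ ≤ ‖M‖ * 1 := by gcongr
      _ = 1 * ‖M‖ := by ring
  have hcomp : (fun z => fderiv ℝ g z (Pi.single i 1)) = L ∘ (fderiv ℝ g) := rfl
  rw [hcomp, ContinuousLinearMap.iteratedFDeriv_comp_left L (hg.fderiv_right (m := ((⊤ : ℕ∞) : WithTop ℕ∞)) (by exact_mod_cast le_top)).contDiffAt (by exact_mod_cast le_top)]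
  calc ‖L.compContinuousMultilinearMap (iteratedFDeriv ℝ k (fderiv ℝ g) z)‖
      ≤ ‖L‖ * ‖iteratedFDeriv ℝ k (fderiv ℝ g) z‖ :=
        ContinuousLinearMap.norm_compContinuousMultilinearMap_le _ _
    _ ≤ 1 * ‖iteratedFDeriv ℝ k (fderiv ℝ g) z‖ := by gcongr
    _ = ‖iteratedFDeriv ℝ (k+1) g z‖ := by rw [one_mul, norm_iteratedFDeriv_fderiv]

lemma key (D : ℝ) (hD : 0 < D) :
    ∀ (n : ℕ) (B : ℕ → ℝ) (τ : ℝ), 1 ≤ τ →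
      ∀ P : Fin d → ℝ, (∀ i, 0 < P i) → (∀ i, P i ≤ D) →
        ∀ g : (Fin d → ℝ) → ℝ, ContDiff ℝ (⊤ : ℕ∞) g →
          (∀ (i : Fin d) (x : Fin d → ℝ), g (x + Pi.single i (P i)) = g x) →
          (∃ y, g y = 0) →
          (∀ (k : ℕ) (x : Fin d → ℝ), ‖iteratedFDeriv ℝ k g x‖ ≤ B k / τ ^ k) →
          ∀ x : Fin d → ℝ, |g x| ≤ (d * D) ^ n * B n / τ ^ n := by
  intro n
  induction n with
  | zero =>
      intro B τ hτ P hP hPD g hg hper hz hbd x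
      have := hbd 0 x
      rw [norm_iteratedFDeriv_zero, Real.norm_eq_abs] at this
      simpa using this
  | succ n ih =>
      intro B τ hτ P hP hPD g hg hper hz hbd x
      have hτ0 : (0:ℝ) < τ := lt_of_lt_of_le one_pos hτ
      obtain ⟨y0, hy0⟩ := hz
      have hgred : ∀ z, g z = g (red P z) := by
        intro z
        have h1 := per_lattice hper (fun i => ⌊z i / P i⌋) (red P z)
        rw [red_decomp hP z] at h1
        exact h1
      -- global max point gives zeros of all partial derivatives
      set K : Set (Fin d → ℝ) := Set.univ.pi fun i => Set.Icc (0:ℝ) (P i) with hK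
      have hKc : IsCompact K := isCompact_univ_pi fun i => isCompact_Icc
      have hKne : K.Nonempty := ⟨0, fun i _ => ⟨le_refl 0, (hP i).le⟩⟩
      have hredK : ∀ z, red P z ∈ K := fun z i _ => red_mem hP z i
      obtain ⟨ymax, hymaxK, hmax⟩ := hKc.exists_isMaxOn hKne (hg.continuous).continuousOn
      have hglob : ∀ z, g z ≤ g ymax := fun z => (hgred z) ▸ hmax (hredK z)
      have hlocmax : IsLocalMax g ymax := Filter.Eventually.of_forall hglob
      have hder0 : fderiv ℝ g ymax = 0 := hlocmax.fderiv_eq_zero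
      -- partial derivatives satisfy the induction hypothesis
      have hgdiff : Differentiable ℝ g := hg.differentiable (by simp)
      have hpd : ∀ (i : Fin d) (z : Fin d → ℝ),
          |fderiv ℝ g z (Pi.single i 1)| ≤ (↑d * D) ^ n * (B (n+1) / τ) / τ ^ n := by
        intro i z
        refine ih (fun k => B (k+1) / τ) τ hτ P hP hPD
          (fun z => fderiv ℝ g z (Pi.single i 1))
          ((hg.fderiv_right (by simp)).clm_apply contDiff_const)
          (fun j w => by
            show fderiv ℝ g (w + Pi.single j (P j)) (Pi.single i 1) = fderiv ℝ g w (Pi.single i 1)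
            rw [fderiv_shift hgdiff _ (hper j) w])
          ⟨ymax, by
            show fderiv ℝ g ymax (Pi.single i 1) = 0
            rw [hder0]; rfl⟩
          (fun k w => ?_) z
        calc ‖iteratedFDeriv ℝ k (fun z => fderiv ℝ g z (Pi.single i 1)) w‖
            ≤ ‖iteratedFDeriv ℝ (k+1) g w‖ := pd_bound g hg i k w
          _ ≤ B (k+1) / τ ^ (k+1) := hbd (k+1) w
          _ = B (k+1) / τ / τ ^ k := by rw [div_div, ← pow_succ']
      -- bound on the full derivative
      set c2 : ℝ := ↑d * ((↑d * D) ^ n * (B (n+1) / τ) / τ ^ n) with hc2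
      have hfd : ∀ z, ‖fderiv ℝ g z‖ ≤ c2 := by
        intro z
        calc ‖fderiv ℝ g z‖ ≤ ∑ i, ‖fderiv ℝ g z (Pi.single i (1:ℝ))‖ := opnorm_le_sum _
          _ ≤ ∑ _i : Fin d, (↑d * D) ^ n * (B (n+1) / τ) / τ ^ n := by
              refine Finset.sum_le_sum fun i _ => ?_
              rw [Real.norm_eq_abs]
              exact hpd i z
          _ = c2 := by rw [Finset.sum_const, Finset.card_univ, Fintype.card_fin, nsmul_eq_mul, hc2]
      -- mean value estimate
      have hmv := Convex.norm_image_sub_le_of_norm_fderiv_le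
        (f := g) (s := (Set.univ : Set (Fin d → ℝ))) (C := c2)
        (fun z _ => hgdiff z) (fun z _ => hfd z) convex_univ
        (Set.mem_univ (red P y0)) (Set.mem_univ (red P x))
      have hdist : ‖red P x - red P y0‖ ≤ D := by
        apply (pi_norm_le_iff_of_nonneg hD.le).mpr
        intro j
        have h1 := red_mem hP x j
        have h2 := red_mem hP y0 j
        have h3 := hPD j
        rw [Pi.sub_apply, Real.norm_eq_abs, abs_sub_le_iff]
        constructor <;> [skip; skip] <;>
          · obtain ⟨a1, a2⟩ := h1; obtain ⟨b1, b2⟩ := h2; linarith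
      have hzero : g (red P y0) = 0 := (hgred y0).symm.trans hy0
      have hgx : |g x| = ‖g (red P x) - g (red P y0)‖ := by
        rw [hzero, sub_zero, Real.norm_eq_abs, ← hgred x]
      have hBnn : 0 ≤ B (n+1) := by
        have := (norm_nonneg (iteratedFDeriv ℝ (n+1) g x)).trans (hbd (n+1) x)
        have hp : (0:ℝ) < τ ^ (n+1) := pow_pos hτ0 _
        exact le_of_not_gt fun hneg => absurd this (not_le.mpr (div_neg_of_neg_of_pos hneg hp))
      calc |g x| = ‖g (red P x) - g (red P y0)‖ := hgx
        _ ≤ c2 * ‖red P x - red P y0‖ := hmv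
        _ ≤ c2 * D := by
            apply mul_le_mul_of_nonneg_left hdist
            rw [hc2]; positivity
        _ = (↑d * D) ^ (n+1) * B (n+1) / τ ^ (n+1) := by
            rw [hc2]
            field_simp
            ring

end FlatTorusAux

/-- **Lemma 3.2: decay estimate on a rescaled flat torus.**
The flat torus `(T,h)` is realized as `ℝ^d` modulo the lattice with periods
`P i > 0`; the diameter bound is expressed by `P i ≤ D`.  The hypothesis that `f` is
`C^∞`-bounded with respect to `h_τ = τ⁻² h` translates, in the fixed metric `h`, to
`‖∇^k f‖_h ≤ A k / τ^k` for every `k`.  If moreover `∫_T f dV_h = 0`, then for every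
positive integer `n` there is a constant `C = C(n)` (depending only on the bounds
`A` and on `D`, not on `τ`) such that `|f| ≤ C τ⁻ⁿ`. -/
theorem flat_torus_decay_estimate (d : ℕ) (A : ℕ → ℝ) (D : ℝ) (hD : 0 < D) :
    ∀ n : ℕ, 0 < n → ∃ C : ℝ, 0 < C ∧
      ∀ τ : ℝ, 1 ≤ τ →
        ∀ P : Fin d → ℝ, (∀ i, 0 < P i) → (∀ i, P i ≤ D) →
          ∀ f : (Fin d → ℝ) → ℝ, ContDiff ℝ (⊤ : ℕ∞) f →
            (∀ (i : Fin d) (x : Fin d → ℝ), f (x + Pi.single i (P i)) = f x) →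
            (∫ x in Set.univ.pi fun i => Set.Ico (0 : ℝ) (P i), f x = 0) →
            (∀ (k : ℕ) (x : Fin d → ℝ), ‖iteratedFDeriv ℝ k f x‖ ≤ A k / τ ^ k) →
            ∀ x : Fin d → ℝ, |f x| ≤ C / τ ^ n := by
  intro n _hn
  refine ⟨max 1 ((↑d * D) ^ n * A n), lt_of_lt_of_le one_pos (le_max_left _ _), ?_⟩
  intro τ hτ P hP hPD f hf hper hint hbd x
  have hτ0 : (0:ℝ) < τ := lt_of_lt_of_le one_pos hτ
  obtain ⟨y, _hy, hfy⟩ := exists_zero hP hf.continuous hint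
  have hk := key (d := d) D hD n A τ hτ P hP hPD f hf hper ⟨y, hfy⟩ hbd x
  calc |f x| ≤ (↑d * D) ^ n * A n / τ ^ n := hk
    _ ≤ max 1 ((↑d * D) ^ n * A n) / τ ^ n := by
        gcongr
        exact le_max_right _ _
end

section
/- Quantitative implicit function / continuation statement: Let B₁, B₂ be Banach spaces and Φ : B₁ × [0,1] → B₂ a C¹ map with Φ(0,0) = 0. Suppose there exist constants C, δ, η > 0 with C(δ + 2η) ≤ min(1/(2C), r) for suitable r, such that (i) ‖(∂Φ/∂h)(0,0)^{-1}‖ ≤ C, (ii) ‖(∂Φ/∂h)(h,s) − (∂Φ/∂h)(0,0)‖ ≤ δ + K‖h‖ for all ‖h‖ ≤ r, s ∈ [0,1], with δ + Kr ≤ 1/(2C), and (iii) ‖Φ(0,s)‖ ≤ η for all s. Then there is a unique continuous family {h_s}_{s∈[0,1]} with h_0 = 0, ‖h_s‖ ≤ 2Cη, and Φ(h_s, s) = 0 for all s. -/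
open Set Metric Function Filter Topology
open scoped NNReal

/-!
For each `s` the zeros of `Φ(·, s)` are the fixed points of the simplified Newton map
`N_s h = h - L₀⁻¹ Φ(h, s)`, where `L₀ = ∂Φ/∂h(0,0)`. By the mean value inequality, (i) and (ii)
make `N_s` a `1/2`-contraction on the ball of radius `2Cη ≤ r`, and (iii) gives
`‖N_s 0‖ ≤ Cη`, so `N_s` maps that ball into itself. Banach's fixed point theorem yields a unique
zero `h_s` in the ball; since `N_s` depends continuously on `s` and the contraction constant is
uniform, `s ↦ h_s` is continuous.
-/

namespace ContractingWith

variable {P X : Type*} [TopologicalSpace P] [MetricSpace X] [CompleteSpace X]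
  {K : ℝ≥0} {f : P → X → X}

theorem continuous_fixedPoint [Nonempty X] (hf : ∀ p, ContractingWith K (f p))
    (hcont : ∀ x, Continuous fun p => f p x) :
    Continuous fun p => fixedPoint (f p) (hf p) := by
  refine continuous_iff_continuousAt.2 fun p₀ => tendsto_iff_dist_tendsto_zero.2 ?_
  set x₀ := fixedPoint (f p₀) (hf p₀)
  have hbound : ∀ p, dist (fixedPoint (f p) (hf p)) x₀ ≤ dist x₀ (f p x₀) / (1 - K) :=
    fun p => dist_comm x₀ _ ▸ (hf p).dist_fixedPoint_le x₀
  have hlim : Tendsto (fun p => dist x₀ (f p x₀) / (1 - K)) (𝓝 p₀) (𝓝 0) := by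
    have := (((continuous_const (y := x₀)).dist (hcont x₀)).div_const (1 - (K : ℝ))).tendsto p₀
    rwa [(hf p₀).fixedPoint_isFixedPt.eq, dist_self, zero_div] at this
  exact squeeze_zero (fun _ => dist_nonneg) hbound hlim

theorem exists_continuous_fixedPoint_family {s : Set X} (hs : IsClosed s) (hne : s.Nonempty)
    (hK : K < 1) (hmaps : ∀ p, MapsTo (f p) s s) (hlip : ∀ p, LipschitzOnWith K (f p) s)
    (hcont : ∀ x ∈ s, Continuous fun p => f p x) :
    ∃ g : P → X, Continuous g ∧ ∀ p, g p ∈ s ∧ ∀ x ∈ s, IsFixedPt (f p) x ↔ x = g p := by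
  have : Nonempty s := hne.to_subtype
  have : CompleteSpace s := hs.completeSpace_coe
  let T : P → s → s := fun p => (hmaps p).restrict
  have hT : ∀ p, ContractingWith K (T p) :=
    fun p => ⟨hK, (hmaps p).lipschitzOnWith_iff_restrict.1 (hlip p)⟩
  refine ⟨fun p => ((fixedPoint (T p) (hT p) : s) : X),
    continuous_subtype_val.comp (continuous_fixedPoint hT fun x => (hcont x x.2).subtype_mk _),
    fun p => ⟨Subtype.coe_prop _, fun x hx => ?_⟩⟩
  have hfix : IsFixedPt (T p) ⟨x, hx⟩ ↔ ⟨x, hx⟩ = fixedPoint (T p) (hT p) :=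
    ⟨(hT p).fixedPoint_unique, fun h => h ▸ (hT p).fixedPoint_isFixedPt⟩
  exact Subtype.ext_iff.symm.trans (hfix.trans Subtype.ext_iff)

end ContractingWith

theorem LipschitzOnWith.mapsTo_closedBall_self {X : Type*} [PseudoMetricSpace X] {g : X → X}
    {K : ℝ≥0} {x₀ : X} {R : ℝ} (hg : LipschitzOnWith K g (closedBall x₀ R))
    (h₀ : dist (g x₀) x₀ ≤ (1 - K) * R) : MapsTo g (closedBall x₀ R) (closedBall x₀ R) := by
  intro x hx
  have hx₀ : x₀ ∈ closedBall x₀ R := mem_closedBall_self (dist_nonneg.trans hx)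
  calc dist (g x) x₀ ≤ dist (g x) (g x₀) + dist (g x₀) x₀ := dist_triangle _ _ _
    _ ≤ K * R + (1 - K) * R := by
      gcongr
      exact (hg.dist_le_mul x hx x₀ hx₀).trans (by gcongr; exact hx)
    _ = R := by ring

section NewtonMap

variable {E F : Type*} [NormedAddCommGroup E] [NormedSpace ℝ E] [NormedAddCommGroup F]
  [NormedSpace ℝ F]

def newtonMap (L : E ≃L[ℝ] F) (f : E → F) (x : E) : E := x - L.symm (f x)

theorem isFixedPt_newtonMap_iff {L : E ≃L[ℝ] F} {f : E → F} {x : E} :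
    IsFixedPt (newtonMap L f) x ↔ f x = 0 := by
  rw [IsFixedPt, newtonMap, sub_eq_self, L.symm.map_eq_zero_iff]

theorem newtonMap_sub_newtonMap (L : E ≃L[ℝ] F) (f : E → F) (x y : E) :
    newtonMap L f x - newtonMap L f y = -L.symm (f x - f y - L (x - y)) := by
  simp only [newtonMap, map_sub, L.symm_apply_apply]
  abel

theorem lipschitzOnWith_newtonMap {L : E ≃L[ℝ] F} {f : E → F} {s : Set E} {ε : ℝ} {K : ℝ≥0}
    (hs : Convex ℝ s) (hf : ∀ x ∈ s, DifferentiableAt ℝ f x)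
    (hf' : ∀ x ∈ s, ‖fderiv ℝ f x - L‖ ≤ ε) (hK : ‖(L.symm : F →L[ℝ] E)‖ * ε ≤ K) :
    LipschitzOnWith K (newtonMap L f) s := by
  refine LipschitzOnWith.of_dist_le_mul fun x hx y hy => ?_
  rw [dist_eq_norm, dist_eq_norm, newtonMap_sub_newtonMap, norm_neg]
  calc ‖L.symm (f x - f y - L (x - y))‖ ≤ ‖(L.symm : F →L[ℝ] E)‖ * (ε * ‖x - y‖) :=
        (L.symm : F →L[ℝ] E).le_opNorm_of_le (hs.norm_image_sub_le_of_norm_fderiv_le' hf hf' hy hx)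
    _ ≤ K * ‖x - y‖ := by rw [← mul_assoc]; gcongr

theorem LipschitzOnWith.mapsTo_closedBall_newtonMap {L : E ≃L[ℝ] F} {f : E → F} {K : ℝ≥0}
    {R : ℝ} (hN : LipschitzOnWith K (newtonMap L f) (closedBall 0 R))
    (h₀ : ‖(L.symm : F →L[ℝ] E)‖ * ‖f 0‖ ≤ (1 - K) * R) :
    MapsTo (newtonMap L f) (closedBall 0 R) (closedBall 0 R) := by
  refine hN.mapsTo_closedBall_self ?_
  rw [dist_zero_right, newtonMap, zero_sub, norm_neg]
  exact (L.symm : F →L[ℝ] E).le_opNorm _ |>.trans h₀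

end NewtonMap

/-- **Quantitative implicit function theorem (Theorem 3.2 of [sl1]).**
Let `B1`, `B2` be Banach spaces and `Φ : B1 × [0,1] → B2` a `C¹` map with
`Φ(0,0) = 0`.  Suppose there are constants `C, δ, η, K, r > 0` with
`C(δ + 2η) ≤ min(1/(2C), r)` and `δ + K r ≤ 1/(2C)` such that:
(i) the partial derivative `∂Φ/∂h` at `(0,0)` is invertible with inverse of norm
    `≤ C`;
(ii) `‖∂Φ/∂h(h,s) - ∂Φ/∂h(0,0)‖ ≤ δ + K‖h‖` for `‖h‖ ≤ r` and `s ∈ [0,1]`;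
(iii) `‖Φ(0,s)‖ ≤ η` for all `s ∈ [0,1]`.
Then there is a unique continuous family `{h_s}` with `h_0 = 0`, `‖h_s‖ ≤ 2Cη`
and `Φ(h_s, s) = 0` for all `s ∈ [0,1]`. -/
theorem quantitative_implicit_function_theorem
    {B1 B2 : Type*} [NormedAddCommGroup B1] [NormedSpace ℝ B1] [CompleteSpace B1]
    [NormedAddCommGroup B2] [NormedSpace ℝ B2]
    (Φ : B1 → ℝ → B2)
    (hC1 : ContDiff ℝ 1 fun p : B1 × ℝ => Φ p.1 p.2)
    (hΦ00 : Φ 0 0 = 0)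
    (C δ η K r : ℝ) (hCpos : 0 < C) (hδ : 0 ≤ δ) (hη : 0 ≤ η) (hK : 0 ≤ K)
    (hconst : C * (δ + 2 * η) ≤ min (1 / (2 * C)) r)
    (hsmall : δ + K * r ≤ 1 / (2 * C))
    (L0 : B1 ≃L[ℝ] B2)
    (hL0 : (L0 : B1 →L[ℝ] B2) = fderiv ℝ (fun h => Φ h 0) 0)
    (hL0inv : ‖(L0.symm : B2 →L[ℝ] B1)‖ ≤ C)
    (hlip : ∀ (h : B1) (s : ℝ), ‖h‖ ≤ r → s ∈ Set.Icc (0 : ℝ) 1 →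
      ‖fderiv ℝ (fun x => Φ x s) h - fderiv ℝ (fun x => Φ x 0) 0‖ ≤ δ + K * ‖h‖)
    (hsmallΦ : ∀ s ∈ Set.Icc (0 : ℝ) 1, ‖Φ 0 s‖ ≤ η) :
    ∃! h : Set.Icc (0 : ℝ) 1 → B1,
      Continuous h ∧ h ⟨0, by norm_num⟩ = 0 ∧
        ∀ s : Set.Icc (0 : ℝ) 1, ‖h s‖ ≤ 2 * C * η ∧ Φ (h s) (s : ℝ) = 0 := by
  set R := 2 * C * η
  have hRr : R ≤ r := by nlinarith [hconst.trans (min_le_right _ _)]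
  have hdiff (s : ℝ) : Differentiable ℝ (fun x => Φ x s) :=
    (hC1.comp (contDiff_id.prodMk contDiff_const)).differentiable one_ne_zero
  have hderiv (s : Icc (0 : ℝ) 1) (x : B1) (hx : x ∈ closedBall 0 R) :
      ‖fderiv ℝ (fun x => Φ x s) x - L0‖ ≤ 1 / (2 * C) := by
    have hxr : ‖x‖ ≤ r := (mem_closedBall_zero_iff.1 hx).trans hRr
    calc _ ≤ δ + K * ‖x‖ := hL0 ▸ hlip x s hxr s.2
      _ ≤ 1 / (2 * C) := by nlinarith
  have hlipN (s : Icc (0 : ℝ) 1) :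
      LipschitzOnWith (1 / 2) (newtonMap L0 (Φ · s)) (closedBall 0 R) :=
    lipschitzOnWith_newtonMap (convex_closedBall 0 R) (fun x _ => hdiff s x) (hderiv s) (by
      calc _ ≤ C * (1 / (2 * C)) := by gcongr
        _ = _ := by field_simp; norm_num)
  have hmaps (s : Icc (0 : ℝ) 1) :
      MapsTo (newtonMap L0 (Φ · s)) (closedBall 0 R) (closedBall 0 R) :=
    (hlipN s).mapsTo_closedBall_newtonMap (by
      calc _ ≤ C * η := mul_le_mul hL0inv (hsmallΦ s s.2) (norm_nonneg _) hCpos.le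
        _ = _ := by norm_num; ring)
  have hcont (x : B1) : Continuous fun s : Icc (0 : ℝ) 1 => newtonMap L0 (Φ · s) x :=
    continuous_const.sub (L0.symm.continuous.comp
      (hC1.continuous.comp (continuous_const.prodMk continuous_subtype_val)))
  obtain ⟨g, hg, hgs⟩ := ContractingWith.exists_continuous_fixedPoint_family isClosed_closedBall
    (nonempty_closedBall.2 (by positivity)) (by norm_num) hmaps hlipN (fun x _ => hcont x)
  simp only [mem_closedBall_zero_iff, isFixedPt_newtonMap_iff] at hgs
  refine ⟨g, ⟨hg, ?_, fun s => ⟨(hgs s).1, ((hgs s).2 _ (hgs s).1).2 rfl⟩⟩,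
    fun h ⟨_, _, hh⟩ => funext fun s => ((hgs s).2 _ (hh s).1).1 (hh s).2⟩
  exact (((hgs _).2 0 (by simp; positivity)).1 hΦ00).symm
end
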